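/- Let (G, π₁) and (G, π₂) be permutation groups on the same finite group G, with induced matrix representations Π₁, Π₂ and permutation polytopes P(Π₁), P(Π₂); G acts on each P(Π_i) by left multiplication, g · M := M_{π_i(g)} M. Then (G, π₁) and (G, π₂) are effectively equivalent if and only if there exist a group automorphism φ of G and an affine isomorphism Φ : aff(P(Π₁)) → aff(P(Π₂)) with Φ(P(Π₁)) = P(Π₂) and Φ(g · x) = φ(g) · Φ(x) for all g ∈ G and all vertices x of P(Π₁). -/

import Mathlib

open Finset

/-- The permutation matrix of `σ`: `(M_σ)_{ij} = 1` if `i = σ j` and `0` otherwise. -/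
def permMat (n : ℕ) (σ : Equiv.Perm (Fin n)) : Matrix (Fin n) (Fin n) ℝ :=
  Matrix.of fun i j => if i = σ j then 1 else 0

lemma permMat_one (n : ℕ) : permMat n 1 = 1 := by
  ext i j; simp [permMat, Matrix.one_apply]; congr

lemma permMat_mul (n : ℕ) (σ τ : Equiv.Perm (Fin n)) :
    permMat n (σ * τ) = permMat n σ * permMat n τ := by
  ext i j
  simp only [permMat, Matrix.mul_apply, Matrix.of_apply, Equiv.Perm.mul_apply]
  rw [Finset.sum_eq_single (τ j)]
  · simp; congr
  · intro k _ hk; simp [hk]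
  · simp

/-- The matrix representation `Π : G → GL_n(ℝ)`, `g ↦ M_{π(g)}`, acting on `ℝⁿ`. -/
noncomputable def permRep (n : ℕ) {G : Type} [Group G] (π : G →* Equiv.Perm (Fin n)) :
    Representation ℝ G (Fin n → ℝ) where
  toFun g := (permMat n (π g)).mulVecLin
  map_one' := by simp [permMat_one]; rfl
  map_mul' g h := by simp [permMat_mul]; rfl

variable {G : Type} [Group G] [Fintype G]

/-- The affine kernel `ker°ρ` of a real representation `ρ` of `G`. -/
def affKer {V : Type} [AddCommGroup V] [Module ℝ V]
    (ρ : Representation ℝ G V) : Set (G → ℝ) :=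
  {l | (∑ g : G, l g • (ρ g : V →ₗ[ℝ] V)) = 0 ∧ (∑ g : G, l g) = 0}

/-- Direct sum (realized on the product space) of two representations. -/
def prodRep {V W : Type} [AddCommGroup V] [Module ℝ V] [AddCommGroup W] [Module ℝ W]
    (ρ : Representation ℝ G V) (σ : Representation ℝ G W) :
    Representation ℝ G (V × W) where
  toFun g := (ρ g).prodMap (σ g)
  map_one' := by ext <;> simp
  map_mul' g h := by ext <;> simp

/-- Isomorphism of `G`-representations. -/
def RepIso {V W : Type} [AddCommGroup V] [Module ℝ V] [AddCommGroup W] [Module ℝ W]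
    (ρ : Representation ℝ G V) (σ : Representation ℝ G W) : Prop :=
  ∃ e : V ≃ₗ[ℝ] W, ∀ (g : G) (v : V), e (ρ g v) = σ g (e v)

/-- Stable equivalence of real representations. -/
def StablyEquivalent {V W : Type} [AddCommGroup V] [Module ℝ V] [AddCommGroup W] [Module ℝ W]
    (ρ₁ : Representation ℝ G V) (ρ₂ : Representation ℝ G W) : Prop :=
  ∃ (V' : Type) (_ : AddCommGroup V') (_ : Module ℝ V') (ρ₁' : Representation ℝ G V')
    (W' : Type) (_ : AddCommGroup W') (_ : Module ℝ W') (ρ₂' : Representation ℝ G W'),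
    affKer ρ₁ ⊆ affKer ρ₁' ∧ affKer ρ₂ ⊆ affKer ρ₂' ∧
    RepIso (prodRep ρ₁ ρ₁') (prodRep ρ₂ ρ₂')


/-
Stable equivalence is equality of affine kernels: the affine kernel of a direct sum is the
intersection of the affine kernels, and isomorphic representations have the same one. The affine
kernel of `Π` is the space of affine dependencies among the vertices `M_{π(g)}` of `P(Π)`, and two
finite families of points have the same affine dependencies iff each is the image of the other
under an affine map (homogenize, then factor one linear map through another with a smaller
kernel). Such a pair of maps is an affine isomorphism of the hulls carrying `M_{π₁(g)}` to
`M_{π₂(φ g)}`, which makes it equivariant. Conversely, an affine isomorphism sends the vertex `1`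
to some vertex `M_{π₂(d)}`, so by equivariance it sends `M_{π₁(g)}` to `M_{π₂(φ g)} M_{π₂(d)}`;
right multiplication by the invertible `M_{π₂(d)}` does not change affine dependencies.
-/

section AffineRelations

variable {K ι E F : Type*} [Field K] [Fintype ι]
  [AddCommGroup E] [Module K E] [AddCommGroup F] [Module K F]

-- Homogenizing `x i ↦ (1, x i)` turns the affine dependencies of `x` into linear ones.
variable (K) in
def affineRelations (x : ι → E) : Submodule K (ι → K) :=
  LinearMap.ker (Fintype.linearCombination K fun i => ((1 : K), x i))

lemma mem_affineRelations {x : ι → E} {l : ι → K} :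
    l ∈ affineRelations K x ↔ ∑ i, l i = 0 ∧ ∑ i, l i • x i = 0 := by
  simp [affineRelations, Fintype.linearCombination_apply, Prod.ext_iff, Prod.fst_sum,
    Prod.snd_sum]

lemma LinearMap.exists_comp_eq_of_ker_le {V W U : Type*} [AddCommGroup V] [Module K V]
    [AddCommGroup W] [Module K W] [AddCommGroup U] [Module K U]
    (A : V →ₗ[K] W) (B : V →ₗ[K] U) (h : LinearMap.ker A ≤ LinearMap.ker B) :
    ∃ L : W →ₗ[K] U, L ∘ₗ A = B := by
  obtain ⟨L, hL⟩ := LinearMap.exists_extend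
    ((LinearMap.ker A).liftQ B h ∘ₗ A.quotKerEquivRange.symm.toLinearMap)
  refine ⟨L, LinearMap.ext fun v => ?_⟩
  have := congr($hL ⟨A v, LinearMap.mem_range_self A v⟩)
  simpa [LinearMap.quotKerEquivRange_symm_apply_image] using this

theorem exists_affineMap_apply_eq_iff_affineRelations_le (x : ι → E) (y : ι → F) :
    (∃ f : E →ᵃ[K] F, ∀ i, f (x i) = y i) ↔ affineRelations K x ≤ affineRelations K y := by
  classical
  constructor
  · rintro ⟨f, hf⟩ l hl
    rw [mem_affineRelations] at hl ⊢
    refine ⟨hl.1, ?_⟩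
    calc ∑ i, l i • y i = ∑ i, l i • (f.linear (x i) + f 0) :=
        Finset.sum_congr rfl fun i _ => by rw [← hf]; exact congrArg _ (congrFun f.decomp (x i))
      _ = f.linear (∑ i, l i • x i) + (∑ i, l i) • f 0 := by
        simp [smul_add, Finset.sum_add_distrib, Finset.sum_smul]
      _ = 0 := by simp [hl.1, hl.2]
  · intro h
    obtain ⟨L, hL⟩ := LinearMap.exists_comp_eq_of_ker_le _ _ h
    -- dehomogenize: `e ↦ (L (1, e)).2`
    refine ⟨(LinearMap.snd K K F ∘ₗ L).toAffineMap.comp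
      ((AffineMap.const K E (1 : K)).prod (AffineMap.id K E)), fun i => ?_⟩
    have := congr(($hL (Pi.single i 1)).2)
    simpa using this

theorem affineRelations_eq_iff (x : ι → E) (y : ι → F) :
    affineRelations K x = affineRelations K y ↔
      (∃ f : E →ᵃ[K] F, ∀ i, f (x i) = y i) ∧ (∃ f : F →ᵃ[K] E, ∀ i, f (y i) = x i) := by
  rw [le_antisymm_iff, exists_affineMap_apply_eq_iff_affineRelations_le,
    exists_affineMap_apply_eq_iff_affineRelations_le]

lemma affineRelations_comp_of_injective (x : ι → E) {e : E →ₗ[K] F} (he : Function.Injective e) :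
    affineRelations K (e ∘ x) = affineRelations K x := by
  ext l
  simp only [mem_affineRelations, Function.comp_apply, ← map_smul, ← map_sum,
    map_eq_zero_iff e he]

end AffineRelations

section AffineKernel

variable {V W : Type} [AddCommGroup V] [Module ℝ V] [AddCommGroup W] [Module ℝ W]

lemma affKer_prodRep (ρ : Representation ℝ G V) (σ : Representation ℝ G W) :
    affKer (prodRep ρ σ) = affKer ρ ∩ affKer σ := by
  ext l
  have hsum : ∑ g, l g • (prodRep ρ σ g : V × W →ₗ[ℝ] V × W)
      = (∑ g, l g • (ρ g : V →ₗ[ℝ] V)).prodMap (∑ g, l g • (σ g : W →ₗ[ℝ] W)) := by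
    ext <;> simp [prodRep, LinearMap.sum_apply, Prod.fst_sum, Prod.snd_sum]
  have hzero : ∀ (A : V →ₗ[ℝ] V) (B : W →ₗ[ℝ] W), A.prodMap B = 0 ↔ A = 0 ∧ B = 0 := by
    refine fun A B => ⟨fun h => ⟨?_, ?_⟩, fun h => by simp [h.1, h.2]⟩
    · ext v; simpa using congr(($h (v, 0)).1)
    · ext w; simpa using congr(($h (0, w)).2)
  simp only [affKer, Set.mem_ofPred_eq, Set.mem_inter_iff, hsum, hzero]
  tauto

lemma affKer_eq_of_repIso {ρ : Representation ℝ G V} {σ : Representation ℝ G W}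
    (h : RepIso ρ σ) : affKer ρ = affKer σ := by
  obtain ⟨e, he⟩ := h
  have hconj : ∀ l : G → ℝ, e.conj (∑ g, l g • (ρ g : V →ₗ[ℝ] V)) = ∑ g, l g • σ g := by
    intro l
    simp only [map_sum, map_smul]
    congr! 2 with g
    ext w
    simp [LinearEquiv.conj_apply_apply, he]
  ext l
  simp only [affKer, Set.mem_ofPred_eq, ← hconj l, LinearEquiv.map_eq_zero_iff]

theorem stablyEquivalent_iff_affKer_eq (ρ₁ : Representation ℝ G V)
    (ρ₂ : Representation ℝ G W) : StablyEquivalent ρ₁ ρ₂ ↔ affKer ρ₁ = affKer ρ₂ := by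
  constructor
  · rintro ⟨V', _, _, ρ₁', W', _, _, ρ₂', h₁, h₂, hiso⟩
    have := affKer_eq_of_repIso hiso
    rwa [affKer_prodRep, affKer_prodRep, Set.inter_eq_self_of_subset_left h₁,
      Set.inter_eq_self_of_subset_left h₂] at this
  · intro h
    exact ⟨W, _, _, ρ₂, V, _, _, ρ₁, h.le, h.ge, LinearEquiv.prodComm ℝ V W, fun _ _ => rfl⟩

end AffineKernel

lemma affKer_permRep {n : ℕ} (π : G →* Equiv.Perm (Fin n)) :
    affKer (permRep n π) = affineRelations ℝ fun g => permMat n (π g) := by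
  have hsum : ∀ l : G → ℝ, ∑ g, l g • (permRep n π g : (Fin n → ℝ) →ₗ[ℝ] Fin n → ℝ)
      = Matrix.toLin' (∑ g, l g • permMat n (π g)) := by
    intro l
    simp only [map_sum, map_smul]
    rfl
  ext l
  simp only [affKer, Set.mem_ofPred_eq, SetLike.mem_coe, mem_affineRelations, hsum,
    LinearEquiv.map_eq_zero_iff, and_comm]

lemma permMat_eq_permMatrix_inv {n : ℕ} (σ : Equiv.Perm (Fin n)) :
    permMat n σ = σ⁻¹.permMatrix ℝ := by
  ext i j
  simp [permMat, PEquiv.toMatrix_apply, Equiv.eq_symm_apply, eq_comm]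

lemma isUnit_permMat {n : ℕ} (σ : Equiv.Perm (Fin n)) : IsUnit (permMat n σ) :=
  ⟨⟨permMat n σ, permMat n σ⁻¹, by rw [← permMat_mul, mul_inv_cancel, permMat_one],
    by rw [← permMat_mul, inv_mul_cancel, permMat_one]⟩, rfl⟩

/-- Permutation matrices are the vertices of the Birkhoff polytope, which contains the hull. -/
lemma mem_extremePoints_convexHull_of_subset_range_permMat {n : ℕ}
    {S : Set (Matrix (Fin n) (Fin n) ℝ)} (hS : S ⊆ Set.range (permMat n))
    {x : Matrix (Fin n) (Fin n) ℝ} (hx : x ∈ S) : x ∈ (convexHull ℝ S).extremePoints ℝ := by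
  have hperm : Set.range (permMat n) = {σ.permMatrix ℝ | σ : Equiv.Perm (Fin n)} := by
    ext x
    exact ⟨fun ⟨σ, hσ⟩ => ⟨σ⁻¹, hσ ▸ (permMat_eq_permMatrix_inv σ).symm⟩,
      fun ⟨σ, hσ⟩ => ⟨σ⁻¹, by rw [permMat_eq_permMatrix_inv, inv_inv, hσ]⟩⟩
  rw [hperm, ← extremePoints_doublyStochastic] at hS
  have hsub : convexHull ℝ S ⊆ doublyStochastic ℝ (Fin n) :=
    convexHull_min (hS.trans extremePoints_subset) convex_doublyStochastic
  exact inter_extremePoints_subset_extremePoints_of_subset hsub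
    ⟨subset_convexHull ℝ S hx, hS hx⟩

lemma mem_extremePoints_image_of_leftInvOn {𝕜 E F : Type*} [Ring 𝕜] [PartialOrder 𝕜]
    [IsOrderedRing 𝕜] [AddCommGroup E] [Module 𝕜 E] [AddCommGroup F] [Module 𝕜 F]
    {f : E →ᵃ[𝕜] F} {f' : F →ᵃ[𝕜] E} {A : Set E} (hf : Set.LeftInvOn f' f A) {x : E}
    (hx : x ∈ A.extremePoints 𝕜) : f x ∈ (f '' A).extremePoints 𝕜 := by
  refine ⟨Set.mem_image_of_mem f hx.1, ?_⟩
  rintro _ ⟨x₁, hx₁, rfl⟩ _ ⟨x₂, hx₂, rfl⟩ hseg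
  have hseg' : x ∈ openSegment 𝕜 x₁ x₂ := by
    rw [← hf hx.1, ← hf hx₁, ← hf hx₂, ← image_openSegment]
    exact Set.mem_image_of_mem f' hseg
  rw [hx.2 hx₁ hx₂ hseg']

lemma leftInvOn_affineSpan_range_of_apply_eq {K ι E F : Type*} [Ring K] [AddCommGroup E]
    [Module K E] [AddCommGroup F] [Module K F] {x : ι → E} {y : ι → F}
    {f : E →ᵃ[K] F} {f' : F →ᵃ[K] E} (hf : ∀ i, f (x i) = y i) (hf' : ∀ i, f' (y i) = x i) :
    Set.LeftInvOn f' f (affineSpan K (Set.range x)) := fun _ hp =>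
  AffineMap.eqOn_affineSpan (f := f'.comp f) (g := AffineMap.id K E)
    (by rintro _ ⟨i, rfl⟩; simp [hf, hf']) hp

def permPolytope {H : Type} [Group H] (n : ℕ) (π : H →* Equiv.Perm (Fin n)) :
    Set (Matrix (Fin n) (Fin n) ℝ) :=
  convexHull ℝ (Set.range fun g => permMat n (π g))

/-- An affine `(G, φ)`-isomorphism `P(Π₁) → P(Π₂)`; `f'` is the inverse of `f` on the affine
hulls. -/
def IsAffineEquivariantIso {H : Type} [Group H] {n₁ n₂ : ℕ} (π₁ : H →* Equiv.Perm (Fin n₁))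
    (π₂ : H →* Equiv.Perm (Fin n₂)) (φ : H ≃* H)
    (f : Matrix (Fin n₁) (Fin n₁) ℝ →ᵃ[ℝ] Matrix (Fin n₂) (Fin n₂) ℝ)
    (f' : Matrix (Fin n₂) (Fin n₂) ℝ →ᵃ[ℝ] Matrix (Fin n₁) (Fin n₁) ℝ) : Prop :=
  f '' permPolytope n₁ π₁ = permPolytope n₂ π₂ ∧
    (∀ x ∈ affineSpan ℝ (permPolytope n₁ π₁), f' (f x) = x) ∧
    (∀ y ∈ affineSpan ℝ (permPolytope n₂ π₂), f (f' y) = y) ∧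
    ∀ g, ∀ x ∈ (permPolytope n₁ π₁).extremePoints ℝ,
      f (permMat n₁ (π₁ g) * x) = permMat n₂ (π₂ (φ g)) * f x

section PermPolytope

variable {n₁ n₂ : ℕ} {π₁ : G →* Equiv.Perm (Fin n₁)} {π₂ : G →* Equiv.Perm (Fin n₂)}
  {φ : G ≃* G}

theorem exists_isAffineEquivariantIso_of_affineRelations_eq
    (h : affineRelations ℝ (fun g => permMat n₁ (π₁ g))
      = affineRelations ℝ (fun g => permMat n₂ (π₂ (φ g)))) :
    ∃ f f', IsAffineEquivariantIso π₁ π₂ φ f f' := by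
  obtain ⟨⟨f, hf⟩, ⟨f', hf'⟩⟩ := (affineRelations_eq_iff _ _).1 h
  have hrange :
      Set.range (fun g => permMat n₂ (π₂ (φ g))) = Set.range fun g => permMat n₂ (π₂ g) :=
    φ.surjective.range_comp fun g => permMat n₂ (π₂ g)
  refine ⟨f, f', ?_, ?_, ?_, ?_⟩
  · have hfM : ⇑f ∘ (fun g => permMat n₁ (π₁ g)) = fun g => permMat n₂ (π₂ (φ g)) := funext hf
    rw [permPolytope, permPolytope, AffineMap.image_convexHull, ← Set.range_comp, hfM, hrange]
  · rw [permPolytope, affineSpan_convexHull]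
    exact leftInvOn_affineSpan_range_of_apply_eq hf hf'
  · rw [permPolytope, affineSpan_convexHull, ← hrange]
    exact leftInvOn_affineSpan_range_of_apply_eq hf' hf
  · rintro g _ hx
    obtain ⟨k, rfl⟩ := extremePoints_convexHull_subset hx
    simp only [← permMat_mul, ← map_mul, hf]

theorem affineRelations_eq_of_isAffineEquivariantIso
    {f : Matrix (Fin n₁) (Fin n₁) ℝ →ᵃ[ℝ] Matrix (Fin n₂) (Fin n₂) ℝ}
    {f' : Matrix (Fin n₂) (Fin n₂) ℝ →ᵃ[ℝ] Matrix (Fin n₁) (Fin n₁) ℝ}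
    (h : IsAffineEquivariantIso π₁ π₂ φ f f') :
    affineRelations ℝ (fun g => permMat n₁ (π₁ g))
      = affineRelations ℝ (fun g => permMat n₂ (π₂ (φ g))) := by
  obtain ⟨himage, hf'f, -, hequiv⟩ := h
  have hmem : ∀ g, permMat n₁ (π₁ g) ∈ permPolytope n₁ π₁ :=
    fun g => subset_convexHull ℝ _ ⟨g, rfl⟩
  have hvert : permMat n₁ (π₁ 1) ∈ (permPolytope n₁ π₁).extremePoints ℝ :=
    mem_extremePoints_convexHull_of_subset_range_permMat
      (Set.range_comp_subset_range π₁ (permMat n₁)) ⟨1, rfl⟩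
  -- `f` maps vertices to vertices, and by equivariance it is determined by `f 1 = M_{π₂(d)}`.
  obtain ⟨d, hd⟩ : f (permMat n₁ (π₁ 1)) ∈ Set.range fun g => permMat n₂ (π₂ g) := by
    refine extremePoints_convexHull_subset (𝕜 := ℝ) ?_
    rw [← permPolytope, ← himage]
    exact mem_extremePoints_image_of_leftInvOn
      (fun x hx => hf'f x (subset_affineSpan ℝ _ hx)) hvert
  have hf : ∀ g, f (permMat n₁ (π₁ g)) = permMat n₂ (π₂ (φ g)) * permMat n₂ (π₂ d) := by
    intro g
    simpa only [hd, map_one, permMat_one, mul_one] using hequiv g _ hvert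
  have hf' : ∀ g, f' (permMat n₂ (π₂ (φ g)) * permMat n₂ (π₂ d)) = permMat n₁ (π₁ g) := by
    intro g
    rw [← hf, hf'f _ (subset_affineSpan ℝ _ (hmem g))]
  calc affineRelations ℝ (fun g => permMat n₁ (π₁ g))
      = affineRelations ℝ (LinearMap.mulRight ℝ (permMat n₂ (π₂ d)) ∘
          fun g => permMat n₂ (π₂ (φ g))) :=
        (affineRelations_eq_iff _ _).2 ⟨⟨f, hf⟩, ⟨f', hf'⟩⟩
    _ = affineRelations ℝ (fun g => permMat n₂ (π₂ (φ g))) :=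
        affineRelations_comp_of_injective _ (isUnit_permMat _).mul_left_injective

end PermPolytope

theorem effectivelyEquivalent_iff_affine_G_phi_isomorphism_general
    {n₁ n₂ : ℕ} (π₁ : G →* Equiv.Perm (Fin n₁)) (π₂ : G →* Equiv.Perm (Fin n₂)) :
    (∃ φ : G ≃* G,
      StablyEquivalent (permRep n₁ π₁) ((permRep n₂ π₂).comp φ.toMonoidHom)) ↔
    (∃ (φ : G ≃* G)
      (f : Matrix (Fin n₁) (Fin n₁) ℝ →ᵃ[ℝ] Matrix (Fin n₂) (Fin n₂) ℝ)
      (f' : Matrix (Fin n₂) (Fin n₂) ℝ →ᵃ[ℝ] Matrix (Fin n₁) (Fin n₁) ℝ),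
      f '' (convexHull ℝ (Set.range fun g : G => permMat n₁ (π₁ g)))
        = convexHull ℝ (Set.range fun g : G => permMat n₂ (π₂ g)) ∧
      (∀ x ∈ affineSpan ℝ (convexHull ℝ (Set.range fun g : G => permMat n₁ (π₁ g))),
        f' (f x) = x) ∧
      (∀ y ∈ affineSpan ℝ (convexHull ℝ (Set.range fun g : G => permMat n₂ (π₂ g))),
        f (f' y) = y) ∧
      (∀ g : G,
        ∀ x ∈ Set.extremePoints ℝ
          (convexHull ℝ (Set.range fun g : G => permMat n₁ (π₁ g))),
        f (permMat n₁ (π₁ g) * x) = permMat n₂ (π₂ (φ g)) * f x)) := by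
  have hstable : ∀ φ : G ≃* G,
      StablyEquivalent (permRep n₁ π₁) ((permRep n₂ π₂).comp φ.toMonoidHom) ↔
        affineRelations ℝ (fun g => permMat n₁ (π₁ g))
          = affineRelations ℝ (fun g => permMat n₂ (π₂ (φ g))) := fun φ => by
    rw [stablyEquivalent_iff_affKer_eq, show (permRep n₂ π₂).comp φ.toMonoidHom
      = permRep n₂ (π₂.comp φ.toMonoidHom) from rfl, affKer_permRep, affKer_permRep,
      SetLike.coe_set_eq]
    rfl
  simp_rw [hstable]
  constructor
  · rintro ⟨φ, h⟩
    obtain ⟨f, f', hiso⟩ := exists_isAffineEquivariantIso_of_affineRelations_eq h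
    exact ⟨φ, f, f', hiso⟩
  · rintro ⟨φ, f, f', hiso⟩
    exact ⟨φ, affineRelations_eq_of_isAffineEquivariantIso (f := f) (f' := f') hiso⟩

/-- Corollary. `(G, π₁)` and `(G, π₂)` are effectively equivalent
if and only if there exist a group automorphism `φ` of `G` and an affine
`(G, φ)`-isomorphism between `P(Π₁)` and `P(Π₂)`, i.e. an affine isomorphism
`Φ : aff(P(Π₁)) → aff(P(Π₂))` with `Φ(P(Π₁)) = P(Π₂)` and `Φ(g·x) = φ(g)·Φ(x)`
for all `g ∈ G` and all vertices `x` of `P(Π₁)` (action `g · M := M_{πᵢ(g)} M`). -/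
theorem effectivelyEquivalent_iff_affine_G_phi_isomorphism
    {n₁ n₂ : ℕ} (π₁ : G →* Equiv.Perm (Fin n₁)) (π₂ : G →* Equiv.Perm (Fin n₂))
    (hπ₁ : Function.Injective π₁) (hπ₂ : Function.Injective π₂) :
    (∃ φ : G ≃* G,
      StablyEquivalent (permRep n₁ π₁) ((permRep n₂ π₂).comp φ.toMonoidHom)) ↔
    (∃ (φ : G ≃* G)
      (f : Matrix (Fin n₁) (Fin n₁) ℝ →ᵃ[ℝ] Matrix (Fin n₂) (Fin n₂) ℝ)
      (f' : Matrix (Fin n₂) (Fin n₂) ℝ →ᵃ[ℝ] Matrix (Fin n₁) (Fin n₁) ℝ),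
      f '' (convexHull ℝ (Set.range fun g : G => permMat n₁ (π₁ g)))
        = convexHull ℝ (Set.range fun g : G => permMat n₂ (π₂ g)) ∧
      (∀ x ∈ affineSpan ℝ (convexHull ℝ (Set.range fun g : G => permMat n₁ (π₁ g))),
        f' (f x) = x) ∧
      (∀ y ∈ affineSpan ℝ (convexHull ℝ (Set.range fun g : G => permMat n₂ (π₂ g))),
        f (f' y) = y) ∧
      (∀ g : G,
        ∀ x ∈ Set.extremePoints ℝ
          (convexHull ℝ (Set.range fun g : G => permMat n₁ (π₁ g))),
        f (permMat n₁ (π₁ g) * x) = permMat n₂ (π₂ (φ g)) * f x)) :=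
  effectivelyEquivalent_iff_affine_G_phi_isomorphism_general π₁ π₂
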